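/- Let M be a matroid of rank r on a finite ground set E, and let X be an r-element subset of E with r_M(X) = r − 1, where r_M denotes the rank function of M. Then there is a unique circuit C of M with C ⊆ X and a unique cocircuit D of M with D ⊆ E ∖ X, and for all e ∈ X and f ∈ E ∖ X, the set X − e + f is dependent in M if and only if e ∈ X ∖ C or f ∈ (E ∖ X) ∖ D. -/

import Mathlib

open Filter Set

/-- The rank of a matroid `M`: the (common) cardinality of a base of `M`. -/
noncomputable def Matroid.rkt {α : Type*} (M : Matroid α) : ℕ :=
  sSup {k | ∃ B, M.IsBase B ∧ B.ncard = k}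

/-- A circuit of a matroid: a minimal dependent set. -/
def Matroid.IsMinDep {α : Type*} (M : Matroid α) (C : Set α) : Prop :=
  M.Dep C ∧ ∀ D, D ⊂ C → ¬ M.Dep D

/-- A hyperplane of a matroid: a maximal proper flat. -/
def Matroid.IsHyperplane {α : Type*} (M : Matroid α) (H : Set α) : Prop :=
  M.IsFlat H ∧ H ⊂ M.E ∧ ∀ F, M.IsFlat F → H ⊂ F → F = M.E

/-- A circuit-hyperplane of a matroid: a set that is both a circuit and a hyperplane. -/
def Matroid.IsCircuitHyperplane {α : Type*} (M : Matroid α) (X : Set α) : Prop :=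
  M.IsMinDep X ∧ M.IsHyperplane X

/-- `W(M)`: the set of circuit-hyperplanes of `M`. -/
def matroidW {α : Type*} (M : Matroid α) : Set (Set α) :=
  {X | M.IsCircuitHyperplane X}

/-- `U(M)`: the dependent subsets of the ground set of cardinality `rk(M)`
that are not circuit-hyperplanes. -/
def matroidU {α : Type*} (M : Matroid α) : Set (Set α) :=
  {X | X.ncard = M.rkt ∧ M.Dep X ∧ ¬ M.IsCircuitHyperplane X}

/-- The set of matroids with ground set `{1, …, n}` (modelled as `Fin n`). -/
def matroidsOn (n : ℕ) : Set (Matroid (Fin n)) := {M | M.E = Set.univ}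

/-- The set of matroids with ground set `{1, …, n}` and rank `r`. -/
def matroidsOnRank (n r : ℕ) : Set (Matroid (Fin n)) :=
  {M | M.E = Set.univ ∧ M.rkt = r}

/-- The rank of a set `X` in a matroid `M`: the largest cardinality of an independent
subset of `X`. -/
noncomputable def Matroid.rSet {α : Type*} (M : Matroid α) (X : Set α) : ℕ :=
  sSup {k | ∃ I, M.Indep I ∧ I ⊆ X ∧ I.ncard = k}

/-! A basis `I` of `X` has `r - 1` elements, so `X = I + x`, and the fundamental circuit of `x`
over `I` is the only circuit inside `X`. Removing an element of that circuit from `X` leaves an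
independent set with the same closure, which decides when `X - e + f` is dependent. Every
`y ∉ cl X` extends `I` to a base, so `cl X` is a hyperplane; its complement is a cocircuit, and any
cocircuit avoiding `X` meets each base `I + y`, hence contains that complement. -/

namespace Matroid

variable {α : Type*} {M : Matroid α} {B C I J K X : Set α} {e f : α}

lemma isMinDep_iff_isCircuit : M.IsMinDep C ↔ M.IsCircuit C :=
  Set.minimal_iff_forall_ssubset.symm

lemma IsBase.ncard_eq_rkt (hB : M.IsBase B) : B.ncard = M.rkt := by
  rw [rkt, eq_comm]
  refine IsGreatest.csSup_eq ⟨⟨B, hB, rfl⟩, ?_⟩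
  rintro _ ⟨B', hB', rfl⟩
  exact (hB'.ncard_eq_ncard_of_isBase hB).le

-- `ncard` of an infinite set is `0`, so a nonzero `rkt` forces the bases to be finite.
lemma rankFinite_of_rkt_ne_zero (h : M.rkt ≠ 0) : M.RankFinite := by
  obtain ⟨B, hB⟩ := M.exists_isBase
  exact hB.rankFinite_of_finite (Set.finite_of_ncard_ne_zero (hB.ncard_eq_rkt ▸ h))

lemma Indep.isBase_of_ncard_eq_rkt [M.RankFinite] (hJ : M.Indep J) (h : J.ncard = M.rkt) :
    M.IsBase J := by
  obtain ⟨B, hB, hJB⟩ := hJ.exists_isBase_superset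
  rwa [Set.eq_of_subset_of_ncard_le hJB (by rw [hB.ncard_eq_rkt, h]) hB.finite]

lemma IsBasis.spanning_insert_of_ncard_add_one_eq_rkt [M.RankFinite] (hI : M.IsBasis I X)
    (hIr : I.ncard + 1 = M.rkt) (he : e ∈ M.E \ M.closure X) : M.Spanning (insert e X) := by
  have heI : e ∉ I := fun h => he.2 (M.subset_closure X hI.subset_ground (hI.subset h))
  have hB : M.IsBase (insert e I) := by
    refine Indep.isBase_of_ncard_eq_rkt ?_ ?_
    · rw [hI.indep.insert_indep_iff_of_notMem heI, hI.closure_eq_closure]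
      exact he
    · rw [Set.ncard_insert_of_notMem heI hI.indep.finite, hIr]
  exact hB.spanning.superset (Set.insert_subset_insert hI.subset)
    (Set.insert_subset he.1 hI.subset_ground)

lemma IsBasis'.ncard_eq_rSet (hI : M.IsBasis' I X) (hX : M.IsRkFinite X) :
    I.ncard = M.rSet X := by
  rw [rSet, eq_comm]
  refine IsGreatest.csSup_eq ⟨⟨I, hI.indep, hI.subset, rfl⟩, ?_⟩
  rintro _ ⟨J, hJ, hJX, rfl⟩
  have hle : J.encard ≤ I.encard := hI.encard_eq_eRk ▸ hJ.encard_le_eRk_of_subset hJX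
  rwa [← (hX.finite_of_indep_subset hJ hJX).cast_ncard_eq,
    ← (hX.finite_of_isBasis' hI).cast_ncard_eq, Nat.cast_le] at hle

section UniqueCircuit

variable (hC : M.IsCircuit C) (hCX : C ⊆ X) (huniq : ∀ C', M.IsCircuit C' → C' ⊆ X → C' = C)
include hC hCX

lemma IsCircuit.closure_sdiff_singleton_of_subset (he : e ∈ C) :
    M.closure (X \ {e}) = M.closure X := by
  have hecl : e ∈ M.closure (X \ {e}) :=
    M.closure_subset_closure (Set.sdiff_subset_sdiff_left hCX)
      (hC.mem_closure_sdiff_singleton_of_mem he)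
  rw [← closure_insert_eq_of_mem_closure hecl, Set.insert_sdiff_singleton,
    Set.insert_eq_of_mem (hCX he)]

include huniq

lemma IsCircuit.indep_sdiff_singleton_of_unique (hXE : X ⊆ M.E) (he : e ∈ C) :
    M.Indep (X \ {e}) := by
  rw [indep_iff_forall_subset_not_isCircuit (Set.sdiff_subset.trans hXE)]
  intro C' hC'X hC'
  obtain rfl := huniq C' hC' (hC'X.trans Set.sdiff_subset)
  exact (hC'X he).2 rfl

lemma IsCircuit.dep_insert_sdiff_singleton_iff (hXE : X ⊆ M.E) (hf : f ∈ M.E \ X) :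
    M.Dep (insert f (X \ {e})) ↔ e ∉ C ∨ f ∈ M.closure X := by
  by_cases heC : e ∈ C
  · have hfX : f ∉ X \ {e} := fun h => hf.2 h.1
    rw [(hC.indep_sdiff_singleton_of_unique hCX huniq hXE heC).insert_dep_iff,
      hC.closure_sdiff_singleton_of_subset hCX heC]
    simp [heC, hfX]
  · refine iff_of_true ?_ (Or.inl heC)
    exact hC.dep.superset (fun y hy => Or.inr ⟨hCX hy, fun h => heC (h ▸ hy)⟩)
      (Set.insert_subset hf.1 (Set.sdiff_subset.trans hXE))

end UniqueCircuit

section Hyperplane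

variable (hsp : ∀ y ∈ M.E \ M.closure X, M.Spanning (insert y X))
include hsp

lemma isCocircuit_compl_closure_of_forall_spanning_insert (hXE : X ⊆ M.E)
    (hX : ¬ M.Spanning X) : M.IsCocircuit (M.E \ M.closure X) := by
  rw [isCocircuit_iff_minimal_compl_nonspanning, Set.minimal_iff_forall_ssubset,
    Set.sdiff_sdiff_cancel_left (M.closure_subset_ground X), closure_spanning_iff hXE]
  refine ⟨hX, fun K hK hKsp => hKsp ?_⟩
  obtain ⟨y, hy, hyK⟩ := Set.exists_of_ssubset hK
  refine (hsp y hy).superset (Set.insert_subset ⟨hy.1, hyK⟩ fun x hxX => ⟨hXE hxX, ?_⟩)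
  exact fun hxK => (hK.subset hxK).2 (M.subset_closure X hXE hxX)

lemma IsCocircuit.compl_closure_subset_of_forall_spanning_insert (hK : M.IsCocircuit K)
    (hKX : Disjoint K X) : M.E \ M.closure X ⊆ K := by
  intro y hy
  by_contra hyK
  refine (isCocircuit_iff_minimal_compl_nonspanning.1 hK).prop ?_
  refine (hsp y hy).superset (Set.insert_subset ⟨hy.1, hyK⟩ ?_)
  exact Set.subset_sdiff.2 ⟨(hsp y hy).subset_ground.trans' (Set.subset_insert y X), hKX.symm⟩

end Hyperplane

end Matroid

theorem unique_circuit_cocircuit_general {α : Type*} (M : Matroid α)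
    (X : Finset α) (hXE : (X : Set α) ⊆ M.E) (hX : X.card = M.rkt)
    (hrank : M.rSet (X : Set α) + 1 = M.rkt) :
    ∃ C D : Set α,
      (M.IsMinDep C ∧ C ⊆ (X : Set α)) ∧
      (∀ C', M.IsMinDep C' → C' ⊆ (X : Set α) → C' = C) ∧
      (M✶.IsMinDep D ∧ D ⊆ M.E \ (X : Set α)) ∧
      (∀ D', M✶.IsMinDep D' → D' ⊆ M.E \ (X : Set α) → D' = D) ∧
      ∀ e ∈ X, ∀ f ∈ M.E \ (X : Set α),
        (M.Dep (insert f ((X : Set α) \ {e})) ↔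
          e ∈ (X : Set α) \ C ∨ f ∈ (M.E \ (X : Set α)) \ D) := by
  have : M.RankFinite := Matroid.rankFinite_of_rkt_ne_zero (by omega)
  obtain ⟨I, hI⟩ := M.exists_isBasis (X : Set α) hXE
  have hIr : I.ncard + 1 = M.rkt := by
    rwa [hI.isBasis'.ncard_eq_rSet (M.isRkFinite_set _)]
  obtain ⟨x, hxI, hxX⟩ := (Set.exists_eq_insert_iff_ncard hI.indep.finite).2
    ⟨hI.subset, by rw [Set.ncard_coe_finset, hX, hIr]⟩
  have hC := hI.indep.fundCircuit_isCircuit (hI.subset_closure (hxX ▸ mem_insert x I)) hxI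
  have hCX : M.fundCircuit x I ⊆ X := hxX ▸ M.fundCircuit_subset_insert x I
  have huniq : ∀ C', M.IsCircuit C' → C' ⊆ X → C' = M.fundCircuit x I :=
    fun C' hC' hC'X => hC'.eq_fundCircuit_of_subset hI.indep (hxX ▸ hC'X)
  have hsp : ∀ y ∈ M.E \ M.closure X, M.Spanning (insert y X) := fun _ =>
    hI.spanning_insert_of_ncard_add_one_eq_rkt hIr
  have hnsp : ¬ M.Spanning X := fun h => by
    have := (hI.isBase_of_spanning h).ncard_eq_rkt
    omega
  have hD := Matroid.isCocircuit_compl_closure_of_forall_spanning_insert hsp hXE hnsp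
  refine ⟨M.fundCircuit x I, M.E \ M.closure X, ⟨Matroid.isMinDep_iff_isCircuit.2 hC, hCX⟩,
    fun C' hC' => huniq C' (Matroid.isMinDep_iff_isCircuit.1 hC'),
    ⟨Matroid.isMinDep_iff_isCircuit.2 hD, Set.sdiff_subset_sdiff_right (M.subset_closure X hXE)⟩,
    fun D' hD' hD'X => ?_, fun e he f hf => ?_⟩
  · have hD' : M.IsCocircuit D' := Matroid.isMinDep_iff_isCircuit.1 hD'
    exact (hD.eq_of_subset_isCircuit hD' (hD'.compl_closure_subset_of_forall_spanning_insert hsp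
      (Set.subset_sdiff.1 hD'X).2)).symm
  · rw [hC.dep_insert_sdiff_singleton_iff hCX huniq hXE hf]
    simp [he, hf.1, hf.2]

/-- Let `M` be a matroid of rank `r` on a finite ground set `E` and let `X`
be an `r`-element subset with `r_M(X) = r − 1`. Then there is a unique circuit `C ⊆ X` and a
unique cocircuit `D ⊆ E ∖ X`, and for all `e ∈ X` and `f ∈ E ∖ X`, the set `X − e + f` is
dependent iff `e ∈ X ∖ C` or `f ∈ (E ∖ X) ∖ D`. -/
theorem unique_circuit_cocircuit {α : Type*} (M : Matroid α) (hfin : M.E.Finite)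
    (X : Finset α) (hXE : (X : Set α) ⊆ M.E) (hX : X.card = M.rkt)
    (hrank : M.rSet (X : Set α) + 1 = M.rkt) :
    ∃ C D : Set α,
      (M.IsMinDep C ∧ C ⊆ (X : Set α)) ∧
      (∀ C', M.IsMinDep C' → C' ⊆ (X : Set α) → C' = C) ∧
      (M✶.IsMinDep D ∧ D ⊆ M.E \ (X : Set α)) ∧
      (∀ D', M✶.IsMinDep D' → D' ⊆ M.E \ (X : Set α) → D' = D) ∧
      ∀ e ∈ X, ∀ f ∈ M.E \ (X : Set α),
        (M.Dep (insert f ((X : Set α) \ {e})) ↔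
          e ∈ (X : Set α) \ C ∨ f ∈ (M.E \ (X : Set α)) \ D) :=
  unique_circuit_cocircuit_general M X hXE hX hrank
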